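/- Let C be a nonempty antichain of nonempty subsets of [c] and C' a nonempty antichain of nonempty subsets of [c] with C' ⊆ ⌊C⌋. Fix an integer λ ≥ 0, nonnegative integers (j_T)_{T∈C}, and n ≥ max(λ, Σ_{T∈C} j_T). Let B ∈ {0,1}^{c×n} be the matrix having exactly j_T columns of support T for each T ∈ C and all other columns zero. Then there exist nonnegative integers (ℓ_S)_{S∈C'} with Σ_{S∈C'} ℓ_S = λ such that x^{B'} divides x^B up to symmetry, where B' ∈ {0,1}^{c×n} is the matrix having exactly ℓ_S columns of support S for each S ∈ C' and all other columns zero, if and only if λ ≤ Σ_{T ∈ C ∩ ⟨C'⟩} j_T. -/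

import Mathlib

open MvPolynomial Finset

noncomputable section

/-- The squarefree monomial `x^B` with exponent matrix `B`, columns given as subsets of `[c]`. -/
def matMon (K : Type*) [CommSemiring K] {c n : ℕ}
    (B : Fin n → Finset (Fin c)) : MvPolynomial (Fin c × Fin n) K :=
  ∏ j : Fin n, ∏ i ∈ B j, X (i, j)

/-- `ℓ_T(B)`: the number of columns of `B` with support `T`. -/
def colCount {c n : ℕ} (B : Fin n → Finset (Fin c)) (T : Finset (Fin c)) : ℕ :=
  (univ.filter fun j => B j = T).card

/-- `x^{B'}` divides `x^B` up to symmetry: there is `σ ∈ Sym(n)` with `x^{B'} ∣ x^{σ·B}`. -/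
def divSym (K : Type*) [Field K] {c n : ℕ} (B' B : Fin n → Finset (Fin c)) : Prop :=
  ∃ σ : Equiv.Perm (Fin n),
    matMon K B' ∣ rename (fun v : Fin c × Fin n => (v.1, σ v.2)) (matMon K B)

/-- `C` is an antichain of nonempty subsets of `[c]`. -/
def IsAntichainNE {c : ℕ} (C : Finset (Finset (Fin c))) : Prop :=
  (∀ T ∈ C, T ≠ ∅) ∧ ∀ T ∈ C, ∀ S ∈ C, T ⊆ S → T = S

lemma rename_matMon (K : Type*) [CommSemiring K] {c n : ℕ}
    (B : Fin n → Finset (Fin c)) (σ : Equiv.Perm (Fin n)) :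
    rename (fun v : Fin c × Fin n => (v.1, σ v.2)) (matMon K B)
      = matMon K (fun j => B (σ.symm j)) := by
  rw [matMon, map_prod]
  have := Equiv.prod_comp σ (fun j => ∏ i ∈ B (σ.symm j), (X (i, j) : MvPolynomial (Fin c × Fin n) K))
  rw [matMon, ← this]
  refine Finset.prod_congr rfl fun j _ => ?_
  rw [map_prod]
  simp [Equiv.symm_apply_apply]

lemma matMon_dvd_iff (K : Type*) [Field K] {c n : ℕ}
    (B' B₂ : Fin n → Finset (Fin c)) :
    matMon K B' ∣ matMon K B₂ ↔ ∀ j, B' j ⊆ B₂ j := by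
  constructor
  · intro h j i hi
    by_contra hib
    have hX : (X (i, j) : MvPolynomial (Fin c × Fin n) K) ∣ matMon K B₂ := by
      have d1 : (X (i, j) : MvPolynomial (Fin c × Fin n) K) ∣ ∏ i' ∈ B' j, X (i', j) :=
        Finset.dvd_prod_of_mem (fun i' => (X (i', j) : MvPolynomial (Fin c × Fin n) K)) hi
      have d2 : (∏ i' ∈ B' j, (X (i', j) : MvPolynomial (Fin c × Fin n) K)) ∣ matMon K B' :=
        Finset.dvd_prod_of_mem (fun j' => ∏ i' ∈ B' j', (X (i', j') : MvPolynomial (Fin c × Fin n) K)) (mem_univ j)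
      exact d1.trans (d2.trans h)
    obtain ⟨q, hq⟩ := hX
    set f : Fin c × Fin n → K := fun v => if v = (i, j) then 0 else 1 with hf
    have h1 : eval f (matMon K B₂) = 1 := by
      rw [matMon, map_prod]
      refine Finset.prod_eq_one fun j' _ => ?_
      rw [map_prod]
      refine Finset.prod_eq_one fun i' hi' => ?_
      rw [eval_X]
      have hne : ((i', j') : Fin c × Fin n) ≠ (i, j) := by
        intro he
        rw [Prod.mk.injEq] at he
        exact hib (by rw [← he.1, ← he.2]; exact hi')
      simp [hf, hne]
    have h2 : eval f (matMon K B₂) = 0 := by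
      rw [hq, map_mul, eval_X, hf]
      simp
    exact one_ne_zero (h1.symm.trans h2)
  · intro h
    rw [matMon, matMon]
    refine Finset.prod_dvd_prod_of_dvd _ _ fun j _ => ?_
    exact Finset.prod_dvd_prod_of_subset _ _ _ (h j)

lemma divSym_iff (K : Type*) [Field K] {c n : ℕ}
    (B' B : Fin n → Finset (Fin c)) :
    divSym K B' B ↔ ∃ τ : Equiv.Perm (Fin n), ∀ j, B' j ⊆ B (τ j) := by
  constructor
  · rintro ⟨σ, hσ⟩
    rw [rename_matMon, matMon_dvd_iff] at hσ
    exact ⟨σ.symm, hσ⟩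
  · rintro ⟨τ, hτ⟩
    refine ⟨τ.symm, ?_⟩
    rw [rename_matMon, matMon_dvd_iff]
    simpa using hτ

lemma sum_colCount {c n : ℕ} (D : Fin n → Finset (Fin c)) (E : Finset (Finset (Fin c))) :
    ∑ S ∈ E, colCount D S = (univ.filter fun j => D j ∈ E).card := by
  rw [Finset.card_eq_sum_card_fiberwise (f := D) (s := univ.filter fun j => D j ∈ E) (t := E)
    (fun x hx => (Finset.mem_filter.mp hx).2)]
  refine Finset.sum_congr rfl fun S hS => ?_
  rw [colCount]
  congr 1
  ext x
  simp only [Finset.mem_filter, Finset.mem_univ, true_and]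
  exact ⟨fun h => ⟨h ▸ hS, h⟩, fun h => h.2⟩

/-- Let `C, C'` be nonempty antichains of nonempty subsets of `[c]` with `C' ⊆ ⌊C⌋`, let
`λ ≥ 0`, let `(j_T)_{T∈C}` be nonnegative integers and `n ≥ max(λ, ∑ j_T)`, and let `B` be
the matrix with exactly `j_T` columns of support `T` for `T ∈ C` and all other columns zero.
Then some matrix `B'` with all nonzero columns supported in `C'` and exactly `λ` such columns
satisfies `x^{B'} ∣ x^B` up to symmetry iff `λ ≤ ∑_{T ∈ C ∩ ⟨C'⟩} j_T`. -/
theorem orbit_divisor_exists_iff (K : Type*) [Field K] {c n : ℕ} (hc : 0 < c)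
    (C C' : Finset (Finset (Fin c)))
    (hCne : C.Nonempty) (hC : IsAntichainNE C)
    (hC'ne : C'.Nonempty) (hC' : IsAntichainNE C')
    (hsub : ∀ S ∈ C', ∃ T ∈ C, S ⊆ T)
    (lam : ℕ) (j : Finset (Fin c) → ℕ)
    (hlam : lam ≤ n) (hjsum : ∑ T ∈ C, j T ≤ n)
    (B : Fin n → Finset (Fin c))
    (hB1 : ∀ T ∈ C, colCount B T = j T)
    (hB2 : ∀ i : Fin n, B i ≠ ∅ → B i ∈ C) :
    (∃ B' : Fin n → Finset (Fin c),
        (∀ i : Fin n, B' i ≠ ∅ → B' i ∈ C') ∧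
        (∑ S ∈ C', colCount B' S) = lam ∧
        divSym K B' B) ↔
      lam ≤ ∑ T ∈ C.filter (fun T => ∃ S ∈ C', S ⊆ T), j T := by
  classical
  set F : Finset (Finset (Fin c)) := C.filter (fun T => ∃ S ∈ C', S ⊆ T) with hF
  set G : Finset (Fin n) := univ.filter (fun j' => B j' ∈ F) with hG
  have hRHS : ∑ T ∈ F, j T = G.card := by
    rw [hG, ← sum_colCount]
    exact Finset.sum_congr rfl fun T hT => (hB1 T (Finset.mem_filter.mp hT).1).symm
  constructor
  · rintro ⟨B', hB'1, hB'2, hdiv⟩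
    rw [divSym_iff] at hdiv
    obtain ⟨τ, hτ⟩ := hdiv
    rw [hRHS, ← hB'2, sum_colCount]
    refine Finset.card_le_card_of_injOn τ ?_ (τ.injective.injOn)
    intro x hx
    rw [Finset.mem_coe, Finset.mem_filter] at hx
    have hxC' : B' x ∈ C' := hx.2
    have hxne : B' x ≠ ∅ := hC'.1 _ hxC'
    have hsubx : B' x ⊆ B (τ x) := hτ x
    have hBne : B (τ x) ≠ ∅ := by
      intro he
      exact hxne (Finset.subset_empty.mp (he ▸ hsubx))
    have hBC : B (τ x) ∈ C := hB2 _ hBne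
    rw [Finset.mem_coe, hG, Finset.mem_filter]
    exact ⟨mem_univ _, Finset.mem_filter.mpr ⟨hBC, ⟨B' x, hxC', hsubx⟩⟩⟩
  · intro h
    rw [hRHS] at h
    obtain ⟨G₀, hG₀sub, hG₀card⟩ := Finset.exists_subset_card_eq h
    have hmemF : ∀ j' ∈ G₀, B j' ∈ F := fun j' hj' =>
      (Finset.mem_filter.mp (hG₀sub hj')).2
    have hex : ∀ T ∈ F, ∃ S, S ∈ C' ∧ S ⊆ T := by
      intro T hT
      obtain ⟨S, hS1, hS2⟩ := (Finset.mem_filter.mp hT).2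
      exact ⟨S, hS1, hS2⟩
    choose pick hpick1 hpick2 using hex
    refine ⟨fun j' => if hj' : j' ∈ G₀ then pick (B j') (hmemF j' hj') else ∅, ?_, ?_, ?_⟩
    · intro i hi
      by_cases hiG : i ∈ G₀
      · simpa [hiG] using hpick1 (B i) (hmemF i hiG)
      · simp [hiG] at hi
    · rw [sum_colCount]
      have : (univ.filter fun j' =>
          (if hj' : j' ∈ G₀ then pick (B j') (hmemF j' hj') else ∅) ∈ C') = G₀ := by
        ext x
        simp only [Finset.mem_filter, Finset.mem_univ, true_and]
        constructor
        · intro hx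
          by_contra hxG
          rw [dif_neg hxG] at hx
          exact hC'.1 _ hx rfl
        · intro hx
          rw [dif_pos hx]
          exact hpick1 _ _
      rw [this, hG₀card]
    · rw [divSym_iff]
      refine ⟨Equiv.refl _, fun j' => ?_⟩
      by_cases hj' : j' ∈ G₀
      · simpa [hj'] using hpick2 (B j') (hmemF j' hj')
      · simp [hj']
  
end
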